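/- arXiv:math/0702753 — 5 statements merged into one kernel-verified Lean document; each statement's English description precedes it below -/
import Mathlib

section
/- Every n-cycle in S_n (n ≥ 2) can be written uniquely as a strict triangular product τ₁⋯τ_{n-1} of transpositions, where τ_i exchanges i+1 with some j ≤ i; conversely every such strict triangular product is an n-cycle. Hence the map (j₁,...,j_{n-1}) ↦ τ(j₁,2)⋯τ(j_{n-1},n), with 1 ≤ j_i ≤ i, is a bijection from [1]×[2]×⋯×[n-1] to the set of n-cycles. -/
/-- The strict triangular product `τ₁ ⋯ τ_{n-1}` where `τ_i` exchanges `i+1`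
with some `j i ≤ i` (0-based). -/
def strictTriProd (n : ℕ) (j : ∀ i : Fin (n - 1), Fin (i.val + 1)) : Equiv.Perm (Fin n) :=
  (List.ofFn fun i : Fin (n - 1) =>
    Equiv.swap (Fin.castLE (by omega) (j i)) ⟨i.val + 1, by omega⟩).prod

/-- `π` is an `n`-cycle: its action has a single orbit. -/
def IsFullCycle {n : ℕ} (π : Equiv.Perm (Fin n)) : Prop :=
  ∀ x y : Fin n, π.SameCycle x y

/-! ### Auxiliary machinery -/

/-- Partial triangular products. -/
def tri (n m : ℕ) (h : m < n) (j : ∀ i : Fin m, Fin (i.val + 1)) : Equiv.Perm (Fin n) :=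
  (List.ofFn fun i : Fin m =>
    Equiv.swap (Fin.castLE (by omega) (j i)) ⟨i.val + 1, by omega⟩).prod

/-- `π` fixes everything above `m` and acts with a single orbit on `{0,…,m}`. -/
def Good (n m : ℕ) (π : Equiv.Perm (Fin n)) : Prop :=
  (∀ x : Fin n, m < x.val → π x = x) ∧
    (∀ x y : Fin n, x.val ≤ m → y.val ≤ m → π.SameCycle x y)

lemma tri_zero (n : ℕ) (h : 0 < n) (j : ∀ i : Fin 0, Fin (i.val + 1)) : tri n 0 h j = 1 := rfl

lemma tri_succ (n m : ℕ) (h : m + 1 < n) (j : ∀ i : Fin (m+1), Fin (i.val + 1)) :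
    tri n (m+1) h j = tri n m (by omega) (fun i => j i.castSucc) *
      Equiv.swap (Fin.castLE (Nat.le_of_lt h) (j (Fin.last m))) ⟨m+1, h⟩ := by
  unfold tri
  rw [List.ofFn_succ', List.prod_concat]
  rfl

variable {n : ℕ}

lemma preserves' {π : Equiv.Perm (Fin n)} {m : ℕ}
    (hfix : ∀ x : Fin n, m < x.val → π x = x) :
    ∀ x : Fin n, x.val ≤ m → (π x).val ≤ m := by
  intro x hx
  by_contra hgt
  push_neg at hgt
  have h2 := hfix _ hgt
  have := π.injective h2
  omega

/-- Generic transfer of same-cycle along a predicate. -/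
lemma sameCycle_transfer {σ π : Equiv.Perm (Fin n)} (P : Fin n → Prop)
    (hpres : ∀ x, P x → P (σ x))
    (key : ∀ x, P x → π.SameCycle x (σ x)) :
    ∀ x y : Fin n, P x → σ.SameCycle x y → π.SameCycle x y := by
  intro x y hx hxy
  obtain ⟨k, -, hk⟩ := hxy.exists_pow_eq'
  subst hk
  clear hxy
  induction k with
  | zero => exact Equiv.Perm.SameCycle.refl _ _
  | succ k ih =>
    have hPk : P ((σ ^ k) x) := by
      clear ih
      induction k with
      | zero => exact hx
      | succ k ih => rw [pow_succ', Equiv.Perm.mul_apply]; exact hpres _ ih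
    have : (σ ^ (k+1)) x = σ ((σ ^ k) x) := by rw [pow_succ', Equiv.Perm.mul_apply]
    rw [this]
    exact ih.trans (key _ hPk)

/-- Forward join: if `σ` is good at level `m` and `a ≤ m < b = m+1`, then
`σ * swap a b` is good at level `m+1`. -/
lemma good_mul_swap {m : ℕ} (hmn : m + 1 < n) {σ : Equiv.Perm (Fin n)}
    (hσ : Good n m σ) {a : Fin n} (ha : a.val ≤ m) :
    Good n (m+1) (σ * Equiv.swap a ⟨m+1, hmn⟩) := by
  obtain ⟨hfix, hcyc⟩ := hσ
  set b : Fin n := ⟨m+1, hmn⟩ with hb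
  set π : Equiv.Perm (Fin n) := σ * Equiv.swap a b with hπ
  have hab : a ≠ b := by intro h; rw [h] at ha; simp [hb] at ha
  have hσb : σ b = b := hfix b (by simp [hb])
  have key : ∀ x : Fin n, x.val ≤ m → π.SameCycle x (σ x) := by
    intro x hx
    by_cases hxa : x = a
    · rw [hxa]
      have h1 : π a = b := by
        simp [hπ, Equiv.Perm.mul_apply, Equiv.swap_apply_left, hσb]
      have h2 : π b = σ a := by
        simp [hπ, Equiv.Perm.mul_apply, Equiv.swap_apply_right]
      refine ⟨2, ?_⟩
      have : (π ^ (2:ℤ)) a = π (π a) := by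
        rw [show (2:ℤ) = 1 + 1 from rfl, zpow_add, zpow_one, Equiv.Perm.mul_apply]
      show (π ^ (2:ℤ)) a = σ a
      rw [this, h1, h2]
    · have hxb : x ≠ b := by intro h; rw [h] at hx; simp [hb] at hx
      have : π x = σ x := by
        simp [hπ, Equiv.Perm.mul_apply, Equiv.swap_apply_of_ne_of_ne hxa hxb]
      exact ⟨1, by rw [zpow_one]; exact this⟩
  have hπab : π a = b := by
    simp [hπ, Equiv.Perm.mul_apply, Equiv.swap_apply_left, hσb]
  have transfer : ∀ x y : Fin n, x.val ≤ m → σ.SameCycle x y → π.SameCycle x y :=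
    sameCycle_transfer (fun z => z.val ≤ m) (preserves' hfix) key
  constructor
  · intro x hx
    have hxa : x ≠ a := by intro h; subst h; omega
    have hxb : x ≠ b := by intro h; rw [h] at hx; simp [hb] at hx
    simp [hπ, Equiv.Perm.mul_apply, Equiv.swap_apply_of_ne_of_ne hxa hxb,
      hfix x (by omega)]
  · intro x y hx hy
    have main : ∀ z : Fin n, z.val ≤ m + 1 → π.SameCycle z a := by
      intro z hz
      by_cases hzb : z = b
      · subst hzb
        exact (Equiv.Perm.SameCycle.symm ⟨1, by simpa using hπab⟩)
      · have hz' : z.val ≤ m := by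
          have : z.val ≠ m + 1 := fun h => hzb (Fin.ext (by simp [hb, h]))
          omega
        exact transfer z a hz' (hcyc z a hz' ha)
    exact (main x hx).trans (main y hy).symm

/-- Backward split: if `π` is good at level `m+1`, then with `b = m+1` and
`a = π⁻¹ b`, we have `a ≤ m` and `π * swap a b` is good at level `m`. -/
lemma good_of_good_succ {m : ℕ} (hmn : m + 1 < n) {π : Equiv.Perm (Fin n)}
    (hπ : Good n (m+1) π) :
    (π⁻¹ ⟨m+1, hmn⟩).val ≤ m ∧
      Good n m (π * Equiv.swap (π⁻¹ ⟨m+1, hmn⟩) ⟨m+1, hmn⟩) := by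
  obtain ⟨hfix, hcyc⟩ := hπ
  set b : Fin n := ⟨m+1, hmn⟩ with hb
  set a : Fin n := π⁻¹ b with ha
  have hπa : π a = b := by simp [ha]
  have hz : (⟨0, by omega⟩ : Fin n).val ≤ m + 1 := by simp
  have hzb : (⟨0, by omega⟩ : Fin n) ≠ b := by
    intro h
    have := congrArg Fin.val h
    simp [hb] at this
  have hπb : π b ≠ b := by
    intro hfixb
    obtain ⟨i, hi⟩ := hcyc ⟨0, by omega⟩ b hz (by simp [hb])
    have : (π ^ i) b = b := π.zpow_apply_eq_self_of_apply_eq_self hfixb i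
    exact hzb ((π ^ i).injective (hi.trans this.symm))
  have hanb : a ≠ b := by
    intro h
    rw [h] at hπa
    exact hπb hπa
  have ham : a.val ≤ m := by
    by_contra hgt
    push_neg at hgt
    have hne : a.val ≠ m + 1 := fun h => hanb (Fin.ext (by simp [hb, h]))
    have h2 := hfix a (by omega)
    rw [hπa] at h2
    exact hanb h2.symm
  refine ⟨ham, ?_, ?_⟩
  · intro x hx
    by_cases hxb : x = b
    · rw [hxb]
      simp [Equiv.Perm.mul_apply, Equiv.swap_apply_right, hπa]
    · have hx2 : m + 1 < x.val := by
        have : x.val ≠ m + 1 := fun h => hxb (Fin.ext (by simp [hb, h]))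
        omega
      have hxa : x ≠ a := by intro h; rw [h] at hx2; omega
      simp [Equiv.Perm.mul_apply, Equiv.swap_apply_of_ne_of_ne hxa hxb,
        hfix x hx2]
  · set σ : Equiv.Perm (Fin n) := π * Equiv.swap a b with hσ
    have hσa : σ a = π b := by
      simp [hσ, Equiv.Perm.mul_apply, Equiv.swap_apply_left]
    have hσx : ∀ x : Fin n, x ≠ a → x ≠ b → σ x = π x := by
      intro x h1 h2
      simp [hσ, Equiv.Perm.mul_apply, Equiv.swap_apply_of_ne_of_ne h1 h2]
    have hpres : ∀ x : Fin n, x.val ≤ m + 1 → (π x).val ≤ m + 1 := preserves' hfix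
    have powpres : ∀ (k : ℕ) (x : Fin n), x.val ≤ m + 1 → ((π ^ k) x).val ≤ m + 1 := by
      intro k
      induction k with
      | zero => intro x hx; simpa using hx
      | succ k ih =>
        intro x hx
        rw [pow_succ', Equiv.Perm.mul_apply]
        exact hpres _ (ih x hx)
    have main : ∀ k : ℕ, ∀ x : Fin n, x.val ≤ m → ((π ^ k) x).val ≤ m →
        σ.SameCycle x ((π ^ k) x) := by
      intro k
      induction k using Nat.strong_induction_on with
      | _ k ih =>
        match k with
        | 0 => intro x _ _; simpa using Equiv.Perm.SameCycle.refl σ x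
        | (k+1) =>
          intro x hx hk1
          set z : Fin n := (π ^ k) x with hzdef
          have hπk1 : (π ^ (k+1)) x = π z := by rw [pow_succ', Equiv.Perm.mul_apply]
          have hzle : z.val ≤ m + 1 := powpres k x (by omega)
          by_cases hzm : z.val ≤ m
          · have ihz := ih k (by omega) x hx hzm
            have hza : z ≠ a := by
              intro h
              rw [hπk1, h, hπa] at hk1
              simp [hb] at hk1
            have hzb2 : z ≠ b := by
              intro h; rw [h] at hzm; simp [hb] at hzm
            have : σ z = π z := hσx z hza hzb2
            rw [hπk1]
            exact ihz.trans ⟨1, by rw [zpow_one]; rw [this]⟩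
          · have hzb3 : z = b := Fin.ext (by simp [hb]; omega)
            match k with
            | 0 =>
              exfalso
              have hxb4 : x = b := by
                have h0 := hzb3
                rw [hzdef] at h0
                simpa using h0
              rw [hxb4] at hx
              simp [hb] at hx
            | (k'+1) =>
              have hπz : π ((π ^ k') x) = b := by
                rw [← Equiv.Perm.mul_apply, ← pow_succ', ← hzdef]
                exact hzb3
              have hk'a : (π ^ k') x = a := by
                have h3 := congrArg (π⁻¹ ·) hπz
                simpa [ha] using h3
              have iha := ih k' (by omega) x hx (by rw [hk'a]; exact ham)
              refine iha.trans ?_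
              rw [hk'a, hπk1, hzb3, ← hσa]
              exact ⟨1, by rw [zpow_one]⟩
    intro x y hx hy
    obtain ⟨k, -, hk⟩ := (hcyc x y (by omega) (by omega)).exists_pow_eq'
    rw [← hk]
    exact main k x hx (by rw [hk]; omega)

lemma good_one (h : 0 < n) : Good n 0 (1 : Equiv.Perm (Fin n)) := by
  constructor
  · intro x _; rfl
  · intro x y hx hy
    have : x = y := Fin.ext (by omega)
    rw [this]

lemma tri_good : ∀ (m : ℕ) (h : m < n) (j : ∀ i : Fin m, Fin (i.val + 1)),
    Good n m (tri n m h j) := by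
  intro m
  induction m with
  | zero => intro h j; rw [tri_zero]; exact good_one (by omega)
  | succ m ih =>
    intro h j
    rw [tri_succ]
    exact good_mul_swap h (ih (by omega) _) (by
      have := (j (Fin.last m)).isLt
      simp only [Fin.coe_castLE]
      omega)

lemma inv_mul_swap_apply {σ : Equiv.Perm (Fin n)} {a b : Fin n} (hσb : σ b = b) :
    (σ * Equiv.swap a b)⁻¹ b = a := by
  rw [mul_inv_rev, Equiv.Perm.mul_apply]
  have : σ⁻¹ b = b := by rw [Equiv.Perm.inv_eq_iff_eq]; exact hσb.symm
  rw [Equiv.swap_inv, this, Equiv.swap_apply_right]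

lemma tri_injective : ∀ (m : ℕ) (h : m < n), Function.Injective (tri n m h) := by
  intro m
  induction m with
  | zero =>
    intro _ j j' _
    funext i
    exact i.elim0
  | succ m ih =>
    intro h j j' heq
    rw [tri_succ, tri_succ] at heq
    set b : Fin n := ⟨m+1, h⟩ with hb
    set a : Fin n := Fin.castLE (Nat.le_of_lt h) (j (Fin.last m)) with haa
    set a' : Fin n := Fin.castLE (Nat.le_of_lt h) (j' (Fin.last m)) with haa'
    set σ : Equiv.Perm (Fin n) := tri n m (by omega) (fun i => j i.castSucc) with hσ
    set σ' : Equiv.Perm (Fin n) := tri n m (by omega) (fun i => j' i.castSucc) with hσ'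
    have hσb : σ b = b := (tri_good m (by omega) _).1 b (by simp [hb])
    have hσ'b : σ' b = b := (tri_good m (by omega) _).1 b (by simp [hb])
    have h1 : (σ * Equiv.swap a b)⁻¹ b = a := inv_mul_swap_apply hσb
    have h2 : (σ' * Equiv.swap a' b)⁻¹ b = a' := inv_mul_swap_apply hσ'b
    rw [heq] at h1
    have haa2 : a = a' := h1.symm.trans h2
    have hlast : j (Fin.last m) = j' (Fin.last m) := by
      have := congrArg Fin.val haa2
      simp only [haa, haa', Fin.coe_castLE] at this
      exact Fin.ext this
    have hσeq : σ = σ' := by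
      have := heq
      rw [haa2] at this
      exact mul_right_cancel this
    have hrest := ih (by omega) hσeq
    funext i
    refine Fin.lastCases ?_ ?_ i
    · exact hlast
    · intro i2
      exact congrFun hrest i2

lemma tri_surjective : ∀ (m : ℕ) (h : m < n) (π : Equiv.Perm (Fin n)),
    Good n m π → ∃ j, tri n m h j = π := by
  intro m
  induction m with
  | zero =>
    intro h π hπ
    refine ⟨fun i => i.elim0, ?_⟩
    rw [tri_zero]
    ext x
    rcases Nat.eq_zero_or_pos x.val with h0 | hpos
    · have h1 : (π x).val ≤ 0 := preserves' hπ.1 x (by omega)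
      simp [Fin.ext (by omega : (π x).val = x.val)]
    · simp [hπ.1 x hpos]
  | succ m ih =>
    intro h π hπ
    obtain ⟨ham, hgood⟩ := good_of_good_succ h hπ
    set b : Fin n := ⟨m+1, h⟩ with hb
    set a : Fin n := π⁻¹ b with ha
    obtain ⟨j', hj'⟩ := ih (by omega) _ hgood
    have hav : a.val < m + 1 := by omega
    refine ⟨Fin.lastCases (motive := fun i => Fin (i.val + 1)) ⟨a.val, hav⟩ j', ?_⟩
    rw [tri_succ]
    have hcast : (fun i : Fin m =>
        Fin.lastCases (motive := fun i => Fin (i.val + 1)) ⟨a.val, hav⟩ j' i.castSucc) = j' := by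
      funext i
      exact Fin.lastCases_castSucc ..
    have hlast : Fin.lastCases (motive := fun i => Fin (i.val + 1)) ⟨a.val, hav⟩ j' (Fin.last m)
        = ⟨a.val, hav⟩ := Fin.lastCases_last ..
    rw [hcast, hlast, hj']
    have hget : (Fin.castLE (Nat.le_of_lt h) (⟨a.val, hav⟩ : Fin (m+1))) = a := Fin.ext (by simp)
    rw [hget, mul_assoc, Equiv.swap_mul_self, mul_one]

/-- For `n ≥ 2`, the strict triangular products are exactly the `n`-cycles:
the map `(j₁,…,j_{n-1}) ↦ τ(j₁,2)⋯τ(j_{n-1},n)` is a bijection onto the set of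
`n`-cycles in `Sₙ`. -/
theorem strict_triangular_bijection_cycles (n : ℕ) (hn : 2 ≤ n) :
    Set.BijOn (strictTriProd n) Set.univ {π : Equiv.Perm (Fin n) | IsFullCycle π} := by
  have hlt : n - 1 < n := by omega
  have heq : strictTriProd n = tri n (n-1) hlt := rfl
  have hGoodIff : ∀ π : Equiv.Perm (Fin n), Good n (n-1) π ↔ IsFullCycle π := by
    intro π
    constructor
    · intro hg x y
      exact hg.2 x y (by have := x.isLt; omega) (by have := y.isLt; omega)
    · intro hfull
      exact ⟨fun x hx => absurd x.isLt (by omega), fun x y _ _ => hfull x y⟩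
  refine ⟨?_, ?_, ?_⟩
  · intro j _
    exact (hGoodIff _).1 (heq ▸ tri_good (n-1) hlt j)
  · intro j _ j' _ hjj'
    exact tri_injective (n-1) hlt (heq ▸ hjj')
  · intro π hπ
    obtain ⟨j, hj⟩ := tri_surjective (n-1) hlt π ((hGoodIff π).2 hπ)
    exact ⟨j, Set.mem_univ j, heq ▸ hj⟩
end

section
/- The probability generating functions φ_{n,p}(u) of the number of moves M_{n,p} of symbol p when running the Fisher-Yates algorithm on n symbols satisfy the recurrences φ_{n,p}(u) = (p/n)·φ_{p,p}(u) + (1 - p/n)·u for 1 ≤ p < n, and φ_{n,n}(u) = (u/n)·[1 + ∑_{p=1}^{n-1} φ_{n-1,p}(u)]. -/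
/-- The number of moves of a symbol in the Fisher–Yates algorithm, defined
recursively via the triangular decomposition.  At stage `k+1` (symbols
`0,…,k+1`), `q = π⁻¹(k+1)` is the position of the last symbol and
`σ = π ∘ τ(k+1,q)` fixes `k+1`.  The final trivial swap is counted (base
case `1`). -/
def movesAux {N : ℕ} : ℕ → Equiv.Perm (Fin N) → Fin N → ℕ
  | 0, _, _ => 1
  | k + 1, π, p =>
    if h : k + 1 < N then
      let lst : Fin N := ⟨k + 1, h⟩
      let q := π⁻¹ lst
      if p = lst then
        if q = lst then 1 else 1 + movesAux k (π * Equiv.swap lst q) q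
      else if p = q then 1 else movesAux k (π * Equiv.swap lst q) p
    else 1

/-- `moves π p` is the number of moves of symbol `p` (0-based; paper's symbol
`p+1`) when the Fisher–Yates algorithm produces `π ∈ Sₙ`. -/
def moves {n : ℕ} (π : Equiv.Perm (Fin n)) (p : Fin n) : ℕ :=
  movesAux (n - 1) π p

/-- `phi n p u` is the probability generating function `φ_{n,p}(u)` of the
number of moves of symbol `p` (1-based) under Fisher–Yates on `n` symbols,
evaluated at `u`. -/
def phi (n p : ℕ) (u : ℚ) : ℚ :=
  if h : 1 ≤ p ∧ p ≤ n then
    (∑ π : Equiv.Perm (Fin n), u ^ moves π ⟨p - 1, by omega⟩) / n.factorial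
  else 0

/-! Every `π ∈ S_{n+1}` factors uniquely as `extendLast σ * swap (last n) q`, where `q = π⁻¹ (last n)`
is the position of the last symbol and `σ ∈ S_n`: this is the first step of Fisher–Yates, read
backwards. Given this factorization, symbol `q` has made its only move, the last symbol moves once
more and then behaves like symbol `q` of `σ`, and every other symbol behaves as in `σ`. Summing
`u ^ moves` over the pairs `(q, σ)` gives
`φ_{n+1,p} = u/(n+1) + n/(n+1) φ_{n,p}` for `p ≤ n`, which telescopes down to `n = p`, and
`φ_{n+1,n+1} = u/(n+1) (1 + ∑_p φ_{n,p})`. -/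

open Equiv Equiv.Perm Finset Fin
open scoped Nat

namespace Equiv.Perm

variable {n : ℕ}

def extendLast (σ : Perm (Fin n)) : Perm (Fin (n + 1)) where
  toFun := lastCases (last n) fun i => (σ i).castSucc
  invFun := lastCases (last n) fun i => (σ⁻¹ i).castSucc
  left_inv x := by cases x using lastCases <;> simp
  right_inv x := by cases x using lastCases <;> simp

@[simp] lemma extendLast_castSucc (σ : Perm (Fin n)) (i : Fin n) :
    extendLast σ i.castSucc = (σ i).castSucc := by
  simp [extendLast]

@[simp] lemma extendLast_last (σ : Perm (Fin n)) : extendLast σ (last n) = last n := by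
  simp [extendLast]

@[simp] lemma extendLast_inv (σ : Perm (Fin n)) : (extendLast σ)⁻¹ = extendLast σ⁻¹ := by
  refine inv_eq_of_mul_eq_one_right (Equiv.ext fun x => ?_)
  cases x using lastCases <;> simp

lemma extendLast_injective : Function.Injective (extendLast (n := n)) := fun σ τ h =>
  Equiv.ext fun i => castSucc_injective n <| by simpa using DFunLike.congr_fun h i.castSucc

lemma extendLast_mul_swap (σ : Perm (Fin n)) (a b : Fin n) :
    extendLast σ * swap a.castSucc b.castSucc = extendLast (σ * swap a b) := by
  ext x
  cases x using lastCases with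
  | last =>
    simp [swap_apply_of_ne_of_ne (castSucc_lt_last a).ne' (castSucc_lt_last b).ne']
  | cast i => simp [(castSucc_injective n).swap_apply]

noncomputable def decomposeLast (n : ℕ) : Fin (n + 1) × Perm (Fin n) ≃ Perm (Fin (n + 1)) :=
  Equiv.ofBijective (fun qσ => extendLast qσ.2 * swap (last n) qσ.1) <| by
    rw [Fintype.bijective_iff_injective_and_card]
    refine ⟨fun ⟨q, σ⟩ ⟨q', σ'⟩ h => ?_, by simp [Fintype.card_perm, Nat.factorial_succ]⟩
    obtain rfl : q = q' := by
      simpa [mul_inv_rev] using DFunLike.congr_fun (congrArg (·⁻¹) h) (last n)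
    exact Prod.ext rfl (extendLast_injective (mul_right_cancel h))

lemma sum_perm_fin_succ {M : Type*} [AddCommMonoid M] (f : Perm (Fin (n + 1)) → M) :
    ∑ π, f π = ∑ q, ∑ σ : Perm (Fin n), f (extendLast σ * swap (last n) q) := by
  rw [← (decomposeLast n).sum_comp, Fintype.sum_prod_type]
  rfl

end Equiv.Perm

section Moves

variable {n : ℕ}

lemma movesAux_extendLast {k : ℕ} (hk : k < n) (σ : Perm (Fin n)) (p : Fin n) :
    movesAux k (extendLast σ) p.castSucc = movesAux k σ p := by
  induction k generalizing σ p with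
  | zero => rfl
  | succ k ih =>
    have hlast : (⟨k + 1, by omega⟩ : Fin (n + 1)) = (⟨k + 1, hk⟩ : Fin n).castSucc := rfl
    rw [movesAux, movesAux, dif_pos (by omega), dif_pos hk]
    simp only [hlast, extendLast_inv, extendLast_castSucc, castSucc_inj, extendLast_mul_swap,
      ih (by omega)]

lemma moves_extendLast_mul_swap (σ : Perm (Fin (n + 1))) (q p : Fin (n + 2)) :
    moves (extendLast σ * swap (last (n + 1)) q) p =
      if p = last (n + 1) then
        if q = last (n + 1) then 1 else 1 + movesAux n (extendLast σ) q
      else if p = q then 1 else movesAux n (extendLast σ) p := by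
  have hq : (extendLast σ * swap (last (n + 1)) q)⁻¹ (last (n + 1)) = q := by
    simp [mul_inv_rev, Perm.mul_apply]
  rw [moves, Nat.add_sub_cancel, movesAux, dif_pos (by omega)]
  simp only [show (⟨n + 1, _⟩ : Fin (n + 2)) = last (n + 1) from rfl, hq, mul_swap_mul_self]

lemma moves_extendLast_last (σ : Perm (Fin n)) : moves (extendLast σ) (last n) = 1 := by
  cases n with
  | zero => rfl
  | succ n =>
    simpa [swap_self, ← Perm.one_def] using
      moves_extendLast_mul_swap σ (last (n + 1)) (last (n + 1))

lemma moves_extendLast_mul_swap_castSucc_last (σ : Perm (Fin n)) (q : Fin n) :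
    moves (extendLast σ * swap (last n) q.castSucc) (last n) = 1 + moves σ q := by
  obtain ⟨n, rfl⟩ := Nat.exists_eq_add_one.2 q.pos
  rw [moves_extendLast_mul_swap, if_pos rfl, if_neg (castSucc_lt_last q).ne,
    movesAux_extendLast n.lt_succ_self]
  rfl

lemma moves_extendLast_mul_swap_castSucc_self (σ : Perm (Fin n)) (p : Fin n) :
    moves (extendLast σ * swap (last n) p.castSucc) p.castSucc = 1 := by
  obtain ⟨n, rfl⟩ := Nat.exists_eq_add_one.2 p.pos
  rw [moves_extendLast_mul_swap, if_neg (castSucc_lt_last p).ne, if_pos rfl]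

lemma moves_extendLast_mul_swap_castSucc_of_ne (σ : Perm (Fin n)) {p : Fin n}
    {q : Fin (n + 1)} (hq : p.castSucc ≠ q) :
    moves (extendLast σ * swap (last n) q) p.castSucc = moves σ p := by
  obtain ⟨n, rfl⟩ := Nat.exists_eq_add_one.2 p.pos
  rw [moves_extendLast_mul_swap, if_neg (castSucc_lt_last p).ne, if_neg hq,
    movesAux_extendLast n.lt_succ_self]
  rfl

variable {R : Type*} [CommSemiring R]

def sumPowMoves (u : R) (p : Fin n) : R :=
  ∑ π : Perm (Fin n), u ^ moves π p

lemma sumPowMoves_last (u : R) :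
    sumPowMoves u (last n) = n ! * u + u * ∑ p : Fin n, sumPowMoves u p := by
  simp only [sumPowMoves, sum_perm_fin_succ, Fin.sum_univ_castSucc, swap_self, ← Perm.one_def,
    mul_one, moves_extendLast_last, moves_extendLast_mul_swap_castSucc_last, pow_add, pow_one,
    mul_sum, Finset.sum_const, card_univ, Fintype.card_perm, Fintype.card_fin, nsmul_eq_mul]
  ring

lemma sumPowMoves_castSucc (u : R) (p : Fin n) :
    sumPowMoves u p.castSucc = n ! * u + n * sumPowMoves u p := by
  classical
  have hcompl : ∀ q ∈ ({p.castSucc}ᶜ : Finset (Fin (n + 1))),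
      ∑ σ : Perm (Fin n), u ^ moves (extendLast σ * swap (last n) q) p.castSucc =
        sumPowMoves u p := fun q hq => by
    simp only [sumPowMoves, moves_extendLast_mul_swap_castSucc_of_ne _
      (Ne.symm (mem_compl.1 hq ∘ mem_singleton.2))]
  rw [sumPowMoves, sum_perm_fin_succ, Fintype.sum_eq_add_sum_compl p.castSucc,
    sum_congr rfl hcompl]
  simp [moves_extendLast_mul_swap_castSucc_self, Fintype.card_perm, card_compl]

end Moves

lemma phi_succ_eq {n : ℕ} (i : Fin n) (u : ℚ) : phi n (i + 1) u = sumPowMoves u i / n ! := by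
  rw [phi, dif_pos ⟨by omega, i.is_lt⟩]
  rfl

lemma sum_Icc_phi (n : ℕ) (u : ℚ) :
    ∑ p ∈ Icc 1 n, phi n p u = (∑ p : Fin n, sumPowMoves u p) / n ! := by
  simp_rw [sum_div, ← phi_succ_eq]
  rw [Fin.sum_univ_eq_sum_range (fun i => phi n (i + 1) u), range_eq_Ico,
    sum_Ico_add' (fun p => phi n p u), zero_add, Ico_add_one_right_eq_Icc]

lemma phi_succ_of_le {n p : ℕ} (hp : 1 ≤ p) (hpn : p ≤ n) (u : ℚ) :
    phi (n + 1) p u = u / (n + 1) + n / (n + 1) * phi n p u := by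
  obtain ⟨i, rfl⟩ : ∃ i, p = i + 1 := ⟨p - 1, by omega⟩
  have h := phi_succ_eq (Fin.castSucc ⟨i, hpn⟩) u
  rw [val_castSucc] at h
  rw [h, phi_succ_eq ⟨i, hpn⟩, sumPowMoves_castSucc, Nat.factorial_succ]
  push_cast
  field_simp

lemma phi_succ_self (n : ℕ) (u : ℚ) :
    phi (n + 1) (n + 1) u = u / (n + 1) * (1 + ∑ p ∈ Icc 1 n, phi n p u) := by
  rw [show n + 1 = ((last n : Fin (n + 1)) : ℕ) + 1 from rfl, phi_succ_eq, sumPowMoves_last,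
    sum_Icc_phi, Nat.factorial_succ]
  push_cast
  field_simp

lemma phi_eq_of_le {n p : ℕ} (hp : 1 ≤ p) (hpn : p ≤ n) (u : ℚ) :
    phi n p u = p / n * phi p p u + (1 - p / n) * u := by
  induction n, hpn using Nat.le_induction with
  | base =>
    have : (p : ℚ) ≠ 0 := by positivity
    simp [this]
  | succ n hpn ih =>
    have : (n : ℚ) ≠ 0 := Nat.cast_ne_zero.2 (by omega)
    rw [phi_succ_of_le hp hpn, ih]
    push_cast
    field_simp
    ring

/-- The recurrences `φ_{n,p}(u) = (p/n)·φ_{p,p}(u) + (1 - p/n)·u` for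
`1 ≤ p < n`, and `φ_{n,n}(u) = (u/n)·[1 + ∑_{p=1}^{n-1} φ_{n-1,p}(u)]`. -/
theorem phi_recurrences :
    (∀ n p : ℕ, 1 ≤ p → p < n → ∀ u : ℚ,
      phi n p u = (p / n) * phi p p u + (1 - p / n) * u) ∧
    (∀ n : ℕ, 1 ≤ n → ∀ u : ℚ,
      phi n n u = (u / n) * (1 + ∑ p ∈ Finset.Icc 1 (n - 1), phi (n - 1) p u)) := by
  refine ⟨fun n p hp hpn u => phi_eq_of_le hp hpn.le u, fun n hn u => ?_⟩
  obtain ⟨n, rfl⟩ := Nat.exists_eq_add_one.2 hn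
  simpa using phi_succ_self n u
end

section
/- The expected number of moves of symbol p in the Fisher-Yates algorithm on n symbols is E[M_{n,p}] = (n + 2p - 2 - H_{p-1})/n, where H_{p-1} = ∑_{i=1}^{p-1} 1/i. -/
/-! A permutation fixing every point beyond `k + 1` factors uniquely as `σ * swap (k + 1) q` with
`q ≤ k + 1` and `σ` fixing every point beyond `k`; this is the decomposition the recursion of
`movesAux` follows. Summing over it, the total move counts `S k p = ∑ σ, movesAux k σ p` satisfy
`S (k + 1) p = (k + 1)! + (k + 1) * S k p` for `p ≤ k` and
`S (k + 1) (k + 1) = (k + 2) * (k + 1)! + ∑ q ≤ k, S k q`, whose solution is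
`S k p = k! * (k + 1 + 2p - H_p)`. -/

open Finset Equiv Nat

def permsFixingAbove (n k : ℕ) : Finset (Perm (Fin n)) :=
  {π | ∀ j : Fin n, k < (j : ℕ) → π j = j}

def pointsUpTo (n k : ℕ) : Finset (Fin n) :=
  {j | (j : ℕ) ≤ k}

lemma sum_range_harmonic (m : ℕ) : ∑ j ∈ range m, harmonic j = m * harmonic m - m := by
  induction m with
  | zero => simp
  | succ m ih =>
    rw [sum_range_succ, ih, harmonic_succ]
    push_cast
    field_simp
    ring

lemma sum_range_two_mul (m : ℕ) : ∑ j ∈ range m, (2 * j : ℚ) = m * (m - 1) := by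
  induction m with
  | zero => simp
  | succ m ih =>
    rw [sum_range_succ, ih]
    push_cast
    ring

lemma sum_range_add_two_mul_sub_harmonic (m : ℕ) :
    ∑ j ∈ range m, ((m : ℚ) + 2 * j - harmonic j) = m * (2 * m - harmonic m) := by
  rw [sum_sub_distrib, sum_add_distrib, sum_range_two_mul, sum_range_harmonic, sum_const,
    card_range, nsmul_eq_mul]
  ring

section

variable {n k : ℕ}

@[simp]
lemma mem_permsFixingAbove {π : Perm (Fin n)} :
    π ∈ permsFixingAbove n k ↔ ∀ j : Fin n, k < (j : ℕ) → π j = j := by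
  simp [permsFixingAbove]

@[simp]
lemma mem_pointsUpTo {j : Fin n} : j ∈ pointsUpTo n k ↔ (j : ℕ) ≤ k := by
  simp [pointsUpTo]

lemma map_valEmbedding_pointsUpTo (hk : k < n) :
    (pointsUpTo n k).map Fin.valEmbedding = range (k + 1) := by
  ext m
  simp only [mem_map, mem_pointsUpTo, Fin.valEmbedding_apply, mem_range]
  exact ⟨by rintro ⟨j, hj, rfl⟩; omega, fun hm => ⟨⟨m, by omega⟩, by simp only; omega, rfl⟩⟩

lemma card_pointsUpTo (hk : k < n) : #(pointsUpTo n k) = k + 1 := by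
  rw [← card_map Fin.valEmbedding, map_valEmbedding_pointsUpTo hk, card_range]

lemma sum_pointsUpTo {M : Type*} [AddCommMonoid M] (hk : k < n) (g : ℕ → M) :
    ∑ j ∈ pointsUpTo n k, g j = ∑ m ∈ range (k + 1), g m := by
  rw [← map_valEmbedding_pointsUpTo hk, sum_map]
  rfl

lemma pointsUpTo_succ (hk : k + 1 < n) :
    pointsUpTo n (k + 1) = cons ⟨k + 1, hk⟩ (pointsUpTo n k) (by simp) := by
  ext j
  simp only [mem_pointsUpTo, mem_cons, Fin.ext_iff]
  omega

lemma permsFixingAbove_zero : permsFixingAbove n 0 = {1} := by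
  ext π
  simp only [mem_permsFixingAbove, mem_singleton]
  refine ⟨fun hπ => Perm.ext fun j => ?_, by rintro rfl j _; rfl⟩
  change π j = j
  by_cases hj : 0 < (j : ℕ)
  · exact hπ j hj
  by_contra hne
  have hπj : 0 < (π j : ℕ) := by
    by_contra h0
    exact hne (Fin.ext (by omega))
  exact hne (π.injective (hπ _ hπj))

lemma inv_apply_mem_pointsUpTo {π : Perm (Fin n)} (hπ : π ∈ permsFixingAbove n k) {j : Fin n}
    (hj : j ∈ pointsUpTo n k) : π⁻¹ j ∈ pointsUpTo n k := by
  rw [mem_pointsUpTo] at hj ⊢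
  by_contra hlt
  have hfix : π⁻¹ j = j := by simpa using (mem_permsFixingAbove.1 hπ _ (not_le.1 hlt)).symm
  exact hlt (by rwa [hfix])

lemma inv_mul_swap_apply_last (hk : k + 1 < n) {σ : Perm (Fin n)}
    (hσ : σ ∈ permsFixingAbove n k) (q : Fin n) :
    (σ * swap ⟨k + 1, hk⟩ q)⁻¹ ⟨k + 1, hk⟩ = q := by
  have hσL : σ⁻¹ ⟨k + 1, hk⟩ = ⟨k + 1, hk⟩ :=
    Perm.inv_eq_iff_eq.2 (mem_permsFixingAbove.1 hσ _ (lt_add_one k)).symm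
  simp [mul_inv_rev, Perm.mul_apply, hσL]

lemma mul_swap_mem_permsFixingAbove_succ (hk : k + 1 < n) {σ : Perm (Fin n)}
    (hσ : σ ∈ permsFixingAbove n k) {q : Fin n} (hq : q ∈ pointsUpTo n (k + 1)) :
    σ * swap ⟨k + 1, hk⟩ q ∈ permsFixingAbove n (k + 1) := by
  rw [mem_pointsUpTo] at hq
  refine mem_permsFixingAbove.2 fun j hj => ?_
  have hjL : j ≠ ⟨k + 1, hk⟩ := fun h => by rw [h] at hj; exact lt_irrefl _ hj
  have hjq : j ≠ q := fun h => by rw [h] at hj; omega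
  rw [Perm.mul_apply, swap_apply_of_ne_of_ne hjL hjq]
  exact mem_permsFixingAbove.1 hσ j (by omega)

lemma mul_swap_inv_apply_mem_permsFixingAbove (hk : k + 1 < n) {π : Perm (Fin n)}
    (hπ : π ∈ permsFixingAbove n (k + 1)) :
    π * swap ⟨k + 1, hk⟩ (π⁻¹ ⟨k + 1, hk⟩) ∈ permsFixingAbove n k := by
  have hq : (π⁻¹ ⟨k + 1, hk⟩ : ℕ) ≤ k + 1 :=
    mem_pointsUpTo.1 (inv_apply_mem_pointsUpTo hπ (by simp))
  refine mem_permsFixingAbove.2 fun j hj => ?_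
  rcases eq_or_ne j ⟨k + 1, hk⟩ with rfl | hjL
  · simp [Perm.mul_apply]
  have hj' : k + 1 < (j : ℕ) := Nat.lt_of_le_of_ne hj fun h => hjL (Fin.ext h.symm)
  have hjq : j ≠ π⁻¹ ⟨k + 1, hk⟩ := fun h => by rw [h] at hj'; omega
  rw [Perm.mul_apply, swap_apply_of_ne_of_ne hjL hjq]
  exact mem_permsFixingAbove.1 hπ j hj'

lemma sum_permsFixingAbove_succ (hk : k + 1 < n) {M : Type*} [AddCommMonoid M]
    (F : Perm (Fin n) → M) :
    ∑ π ∈ permsFixingAbove n (k + 1), F π =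
      ∑ q ∈ pointsUpTo n (k + 1), ∑ σ ∈ permsFixingAbove n k, F (σ * swap ⟨k + 1, hk⟩ q) := by
  rw [← sum_product']
  refine sum_nbij' (fun π => (π⁻¹ ⟨k + 1, hk⟩, π * swap ⟨k + 1, hk⟩ (π⁻¹ ⟨k + 1, hk⟩)))
    (fun x => x.2 * swap ⟨k + 1, hk⟩ x.1) (fun π hπ => ?_) (fun x hx => ?_) (fun π _ => ?_)
    (fun x hx => ?_) (fun π _ => ?_)
  · exact mem_product.2 ⟨inv_apply_mem_pointsUpTo hπ (by simp),
      mul_swap_inv_apply_mem_permsFixingAbove hk hπ⟩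
  · exact mul_swap_mem_permsFixingAbove_succ hk (mem_product.1 hx).2 (mem_product.1 hx).1
  · exact mul_swap_mul_self _ _ _
  · simp only [inv_mul_swap_apply_last hk (mem_product.1 hx).2, mul_swap_mul_self]
  · simp only [mul_swap_mul_self]

lemma card_permsFixingAbove (hk : k < n) : #(permsFixingAbove n k) = (k + 1)! := by
  induction k with
  | zero => simp [permsFixingAbove_zero]
  | succ k ih =>
    rw [card_eq_sum_ones, sum_permsFixingAbove_succ hk]
    simp only [sum_const, smul_eq_mul, mul_one, ih (by omega), card_pointsUpTo hk,
      factorial_succ (k + 1)]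

lemma movesAux_mul_swap (hk : k + 1 < n) {σ : Perm (Fin n)}
    (hσ : σ ∈ permsFixingAbove n k) (q p : Fin n) :
    movesAux (k + 1) (σ * swap ⟨k + 1, hk⟩ q) p =
      if p = ⟨k + 1, hk⟩ then (if q = ⟨k + 1, hk⟩ then 1 else 1 + movesAux k σ q)
      else if p = q then 1 else movesAux k σ p := by
  rw [movesAux, dif_pos hk]
  simp only [inv_mul_swap_apply_last hk hσ, mul_swap_mul_self]

lemma sum_movesAux_succ_of_le (hk : k + 1 < n) {p : Fin n} (hp : (p : ℕ) ≤ k) :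
    ∑ π ∈ permsFixingAbove n (k + 1), movesAux (k + 1) π p =
      (k + 1)! + (k + 1) * ∑ σ ∈ permsFixingAbove n k, movesAux k σ p := by
  have hpL : p ≠ ⟨k + 1, hk⟩ := fun h => by rw [h] at hp; exact absurd hp (by simp)
  have hpQ : p ∈ pointsUpTo n (k + 1) := mem_pointsUpTo.2 (by omega)
  have inner (q : Fin n) :
      ∑ σ ∈ permsFixingAbove n k, movesAux (k + 1) (σ * swap ⟨k + 1, hk⟩ q) p =
        if q = p then (k + 1)! else ∑ σ ∈ permsFixingAbove n k, movesAux k σ p := by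
    rw [sum_congr rfl fun σ hσ => movesAux_mul_swap hk hσ q p]
    by_cases hqp : q = p
    · simp [hqp, hpL, card_permsFixingAbove (Nat.lt_of_succ_lt hk)]
    · simp [hpL, Ne.symm hqp, hqp]
  rw [sum_permsFixingAbove_succ hk, sum_congr rfl fun q _ => inner q, ← add_sum_erase _ _ hpQ,
    if_pos rfl, sum_congr rfl fun q hq => if_neg (ne_of_mem_erase hq), sum_const,
    card_erase_of_mem hpQ, card_pointsUpTo hk, smul_eq_mul, add_tsub_cancel_right]

lemma sum_movesAux_succ_last (hk : k + 1 < n) :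
    ∑ π ∈ permsFixingAbove n (k + 1), movesAux (k + 1) π ⟨k + 1, hk⟩ =
      (k + 2) * (k + 1)! + ∑ q ∈ pointsUpTo n k, ∑ σ ∈ permsFixingAbove n k, movesAux k σ q := by
  have hcard := card_permsFixingAbove (Nat.lt_of_succ_lt hk)
  have inner (q : Fin n) :
      ∑ σ ∈ permsFixingAbove n k, movesAux (k + 1) (σ * swap ⟨k + 1, hk⟩ q) ⟨k + 1, hk⟩ =
        if q = ⟨k + 1, hk⟩ then (k + 1)!
        else (k + 1)! + ∑ σ ∈ permsFixingAbove n k, movesAux k σ q := by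
    rw [sum_congr rfl fun σ hσ => movesAux_mul_swap hk hσ q _]
    by_cases hq : q = ⟨k + 1, hk⟩ <;> simp [hq, sum_add_distrib, hcard]
  have hQ {q : Fin n} (hq : q ∈ pointsUpTo n k) : q ≠ ⟨k + 1, hk⟩ :=
    fun h => by rw [h, mem_pointsUpTo] at hq; exact absurd hq (by simp)
  rw [sum_permsFixingAbove_succ hk, pointsUpTo_succ hk, sum_cons, inner, if_pos rfl,
    sum_congr rfl fun q hq => (inner q).trans (if_neg (hQ hq)), sum_add_distrib, sum_const,
    card_pointsUpTo (Nat.lt_of_succ_lt hk), smul_eq_mul]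
  ring

theorem sum_movesAux_permsFixingAbove (hk : k < n) (p : Fin n) (hp : (p : ℕ) ≤ k) :
    ∑ π ∈ permsFixingAbove n k, (movesAux k π p : ℚ) =
      k ! * (k + 1 + 2 * p - harmonic p) := by
  induction k generalizing p with
  | zero =>
    have hp0 : (p : ℕ) = 0 := by omega
    simp [permsFixingAbove_zero, movesAux, hp0]
  | succ k ih =>
    rw [← Nat.cast_sum]
    rcases hp.lt_or_eq with hlt | heq
    · rw [sum_movesAux_succ_of_le hk (by omega), Nat.cast_add, Nat.cast_mul, Nat.cast_sum,
        ih (by omega) p (by omega), factorial_succ]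
      push_cast
      ring
    · obtain rfl : p = ⟨k + 1, hk⟩ := Fin.ext heq
      rw [sum_movesAux_succ_last hk, Nat.cast_add, Nat.cast_sum,
        sum_congr rfl fun q hq => (Nat.cast_sum _ _).trans (ih (by omega) q (mem_pointsUpTo.1 hq)),
        sum_pointsUpTo (by omega) (fun j => (k ! : ℚ) * (k + 1 + 2 * j - harmonic j)), ← mul_sum]
      have hsum := sum_range_add_two_mul_sub_harmonic (k + 1)
      push_cast at hsum ⊢
      rw [hsum, factorial_succ]
      push_cast
      ring

end

/-- The expected number of moves of symbol `p` (1-based) in the Fisher–Yates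
algorithm on `n` symbols is `(n + 2p - 2 - H_{p-1})/n`. -/
theorem expected_moves (n p : ℕ) (h1 : 1 ≤ p) (h2 : p ≤ n) :
    (∑ π : Equiv.Perm (Fin n), (moves π ⟨p - 1, by omega⟩ : ℚ)) / n.factorial =
      ((n : ℚ) + 2 * p - 2 - ∑ i ∈ Finset.Icc 1 (p - 1), (1 : ℚ) / i) / n := by
  have hn : n ≠ 0 := by omega
  have huniv : permsFixingAbove n (n - 1) = univ :=
    eq_univ_of_forall fun π => mem_permsFixingAbove.2 fun j hj => absurd j.isLt (by omega)
  have hsum := sum_movesAux_permsFixingAbove (k := n - 1) (by omega) (⟨p - 1, by omega⟩ : Fin n)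
    (by simp only; omega)
  rw [huniv] at hsum
  simp only [moves, hsum, one_div, ← harmonic_eq_sum_Icc, ← mul_factorial_pred hn]
  push_cast [Nat.cast_sub h1, Nat.cast_sub (Nat.one_le_iff_ne_zero.2 hn)]
  field_simp
  ring
end

section
/- The explicit formula φ_{n,n}(u) = u/n + (u²/(2-u))·[1 - u(u+1)⋯(u+n-2)/n!] holds for the probability generating function of the number of moves of symbol n under Fisher-Yates, for n ≥ 1 (interpreting the rising product as empty when n = 1). -/
/-! Peel off the last transposition of the Fisher–Yates decomposition: a permutation fixing every
symbol above `k + 1` is uniquely `σ * swap (k + 1) q` with `q ≤ k + 1` and `σ` fixing every symbol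
above `k`. The symbol `k + 1` then moves once more than `σ` moves `q` (just once if `q = k + 1`),
while a symbol `p ≤ k` moves once if `p = q` and as under `σ` otherwise. So the generating function
`A_k` summed over all symbols `≤ k` obeys `A_{k+1} = (k+2)! u + (u + k + 1) A_k`, which solves to
`(2 - u) A_k = u ((k+2)! - (u+k) u(u+1)⋯(u+k-1))`, and the last symbol contributes
`(k+1)! u + u A_k`. -/

open Finset Equiv
open scoped Nat

namespace FisherYates

variable {N : ℕ}

def fixingAbove (N k : ℕ) : Finset (Perm (Fin N)) :=
  {π | ∀ i : Fin N, k < (i : ℕ) → π i = i}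

def atMost (N k : ℕ) : Finset (Fin N) :=
  {q | (q : ℕ) ≤ k}

@[simp]
lemma mem_fixingAbove {k : ℕ} {π : Perm (Fin N)} :
    π ∈ fixingAbove N k ↔ ∀ i : Fin N, k < (i : ℕ) → π i = i := by
  simp [fixingAbove]

@[simp]
lemma mem_atMost {k : ℕ} {q : Fin N} : q ∈ atMost N k ↔ (q : ℕ) ≤ k := by
  simp [atMost]

lemma card_atMost {k : ℕ} (hk : k < N) : #(atMost N k) = k + 1 := by
  simpa [atMost, Nat.lt_succ_iff, hk] using Fin.card_filter_val_lt (n := N) (m := k + 1)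

lemma atMost_succ {k : ℕ} (hk : k + 1 < N) :
    atMost N (k + 1) = insert ⟨k + 1, hk⟩ (atMost N k) := by
  ext q
  simp only [mem_atMost, mem_insert, Fin.ext_iff]
  omega

lemma fixingAbove_zero (hN : 0 < N) : fixingAbove N 0 = {1} := by
  ext π
  simp only [mem_fixingAbove, mem_singleton]
  refine ⟨fun h => Perm.card_support_le_one.mp ?_, fun h i _ => by simp [h]⟩
  calc #π.support ≤ #{(⟨0, hN⟩ : Fin N)} := card_le_card fun i hi => by
        rw [mem_singleton, Fin.ext_iff]
        by_contra hi0
        exact Perm.mem_support.mp hi (h i (Nat.pos_of_ne_zero hi0))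
    _ = 1 := card_singleton _

lemma fixingAbove_of_le {k : ℕ} (hk : N ≤ k + 1) : fixingAbove N k = univ := by
  ext π
  simp only [mem_fixingAbove, mem_univ, iff_true]
  intro i hi
  omega

lemma fixingAbove_apply_succ {k : ℕ} (hk : k + 1 < N) {σ : Perm (Fin N)}
    (hσ : σ ∈ fixingAbove N k) : σ ⟨k + 1, hk⟩ = ⟨k + 1, hk⟩ :=
  mem_fixingAbove.mp hσ _ (Nat.lt_succ_self k)

lemma inv_mul_swap_apply {k : ℕ} (hk : k + 1 < N) {σ : Perm (Fin N)}
    (hσ : σ ⟨k + 1, hk⟩ = ⟨k + 1, hk⟩) (q : Fin N) :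
    (σ * swap ⟨k + 1, hk⟩ q)⁻¹ ⟨k + 1, hk⟩ = q := by
  rw [Perm.inv_eq_iff_eq, Perm.mul_apply, swap_apply_right, hσ]

lemma movesAux_mul_swap {k : ℕ} (hk : k + 1 < N) {σ : Perm (Fin N)}
    (hσ : σ ⟨k + 1, hk⟩ = ⟨k + 1, hk⟩) (q p : Fin N) :
    movesAux (k + 1) (σ * swap ⟨k + 1, hk⟩ q) p =
      if p = ⟨k + 1, hk⟩ then (if q = ⟨k + 1, hk⟩ then 1 else 1 + movesAux k σ q)
      else if p = q then 1 else movesAux k σ p := by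
  rw [movesAux]
  simp only [dif_pos hk, inv_mul_swap_apply hk hσ, mul_swap_mul_self]

lemma mul_swap_mem_fixingAbove {k : ℕ} (hk : k + 1 < N) {σ : Perm (Fin N)}
    (hσ : σ ∈ fixingAbove N k) {q : Fin N} (hq : q ∈ atMost N (k + 1)) :
    σ * swap ⟨k + 1, hk⟩ q ∈ fixingAbove N (k + 1) := by
  rw [mem_atMost] at hq
  rw [mem_fixingAbove] at hσ ⊢
  intro i hi
  rw [Perm.mul_apply, swap_apply_of_ne_of_ne (by grind) (by grind), hσ i (by omega)]

lemma inv_apply_mem_atMost {k : ℕ} (hk : k + 1 < N) {π : Perm (Fin N)}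
    (hπ : π ∈ fixingAbove N (k + 1)) : π⁻¹ ⟨k + 1, hk⟩ ∈ atMost N (k + 1) := by
  rw [mem_atMost]
  by_contra! h
  have hfix := mem_fixingAbove.mp hπ _ h
  exact h.ne (congrArg Fin.val (by simpa using hfix))

lemma mul_swap_inv_mem_fixingAbove {k : ℕ} (hk : k + 1 < N) {π : Perm (Fin N)}
    (hπ : π ∈ fixingAbove N (k + 1)) :
    π * swap ⟨k + 1, hk⟩ (π⁻¹ ⟨k + 1, hk⟩) ∈ fixingAbove N k := by
  have hq := mem_atMost.mp (inv_apply_mem_atMost hk hπ)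
  rw [mem_fixingAbove] at hπ ⊢
  intro i hi
  rcases eq_or_ne i ⟨k + 1, hk⟩ with rfl | hik
  · rw [Perm.mul_apply, swap_apply_left, Perm.coe_inv, apply_symm_apply]
  · have hik' : k + 1 < (i : ℕ) := by grind
    rw [Perm.mul_apply, swap_apply_of_ne_of_ne hik (by grind), hπ i hik']

lemma sum_fixingAbove_succ {M : Type*} [AddCommMonoid M] {k : ℕ} (hk : k + 1 < N)
    (f : Perm (Fin N) → M) :
    ∑ π ∈ fixingAbove N (k + 1), f π =
      ∑ q ∈ atMost N (k + 1), ∑ σ ∈ fixingAbove N k, f (σ * swap ⟨k + 1, hk⟩ q) := by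
  rw [← sum_product']
  refine sum_nbij' (fun π => (π⁻¹ ⟨k + 1, hk⟩, π * swap ⟨k + 1, hk⟩ (π⁻¹ ⟨k + 1, hk⟩)))
    (fun x => x.2 * swap ⟨k + 1, hk⟩ x.1) ?_ ?_ ?_ ?_ ?_
  · intro π hπ
    exact mem_product.mpr ⟨inv_apply_mem_atMost hk hπ, mul_swap_inv_mem_fixingAbove hk hπ⟩
  · rintro ⟨q, σ⟩ hx
    obtain ⟨hq, hσ⟩ := mem_product.mp hx
    exact mul_swap_mem_fixingAbove hk hσ hq
  · intro π _
    exact mul_swap_mul_self _ _ _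
  · rintro ⟨q, σ⟩ hx
    simp only [inv_mul_swap_apply hk (fixingAbove_apply_succ hk (mem_product.mp hx).2),
      mul_swap_mul_self]
  · intro π _
    rw [mul_swap_mul_self]

lemma card_fixingAbove {k : ℕ} (hk : k < N) : #(fixingAbove N k) = (k + 1)! := by
  induction k with
  | zero => rw [fixingAbove_zero hk, card_singleton, Nat.factorial_one]
  | succ k ih =>
    rw [card_eq_sum_ones, sum_fixingAbove_succ hk]
    simp only [sum_const, smul_eq_mul, mul_one, ih (by omega), card_atMost hk,
      Nat.factorial_succ (k + 1)]

section GeneratingFunctions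

variable {R : Type*}

/-- For `p ≤ k < N` this is `(k + 1)! φ_{k+1,p+1}(u)`. -/
def movesSum [CommSemiring R] (u : R) (k : ℕ) (p : Fin N) : R :=
  ∑ π ∈ fixingAbove N k, u ^ movesAux k π p

def totalMovesSum [CommSemiring R] (N : ℕ) (u : R) (k : ℕ) : R :=
  ∑ q ∈ atMost N k, movesSum u k q

lemma movesSum_zero [CommSemiring R] (u : R) (p : Fin N) : movesSum u 0 p = u := by
  rw [movesSum, fixingAbove_zero (Fin.pos p), sum_singleton, movesAux, pow_one]

lemma movesSum_succ_self [CommSemiring R] (u : R) {k : ℕ} (hk : k + 1 < N) :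
    movesSum u (k + 1) (⟨k + 1, hk⟩ : Fin N) = (k + 1)! * u + u * totalMovesSum N u k := by
  have hnot : (⟨k + 1, hk⟩ : Fin N) ∉ atMost N k := by simp
  rw [movesSum, sum_fixingAbove_succ hk, atMost_succ hk, sum_insert hnot, totalMovesSum, mul_sum]
  congr 1
  · rw [sum_congr rfl fun σ hσ => by
      rw [movesAux_mul_swap hk (fixingAbove_apply_succ hk hσ), if_pos rfl, if_pos rfl]]
    rw [sum_const, card_fixingAbove (by omega), nsmul_eq_mul, pow_one]
  · refine sum_congr rfl fun q hq => ?_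
    rw [movesSum, mul_sum]
    refine sum_congr rfl fun σ hσ => ?_
    rw [movesAux_mul_swap hk (fixingAbove_apply_succ hk hσ), if_pos rfl,
      if_neg (ne_of_mem_of_not_mem hq hnot), pow_add, pow_one]

lemma movesSum_succ_of_le [CommSemiring R] (u : R) {k : ℕ} (hk : k + 1 < N) {p : Fin N}
    (hp : (p : ℕ) ≤ k) : movesSum u (k + 1) p = (k + 1)! * u + (k + 1) * movesSum u k p := by
  have hp_ne : p ≠ ⟨k + 1, hk⟩ := by grind
  have hp_mem : p ∈ atMost N (k + 1) := mem_atMost.mpr (by omega)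
  have inner (q : Fin N) : ∑ σ ∈ fixingAbove N k, u ^ movesAux (k + 1) (σ * swap ⟨k + 1, hk⟩ q) p =
      if p = q then (k + 1)! * u else movesSum u k p := by
    rw [sum_congr rfl fun σ hσ => by
      rw [movesAux_mul_swap hk (fixingAbove_apply_succ hk hσ), if_neg hp_ne]]
    split_ifs
    · rw [sum_const, card_fixingAbove (by omega), nsmul_eq_mul, pow_one]
    · rfl
  rw [movesSum, sum_fixingAbove_succ hk, sum_congr rfl fun q _ => inner q,
    ← add_sum_erase _ _ hp_mem, if_pos rfl,
    sum_congr rfl fun q hq => if_neg (ne_of_mem_erase hq).symm, sum_const,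
    card_erase_of_mem hp_mem, card_atMost hk, nsmul_eq_mul]
  push_cast
  ring

lemma totalMovesSum_succ [CommSemiring R] (u : R) {k : ℕ} (hk : k + 1 < N) :
    totalMovesSum N u (k + 1) = (k + 2)! * u + (u + k + 1) * totalMovesSum N u k := by
  have hnot : (⟨k + 1, hk⟩ : Fin N) ∉ atMost N k := by simp
  rw [totalMovesSum, atMost_succ hk, sum_insert hnot, movesSum_succ_self u hk,
    sum_congr rfl fun q hq => movesSum_succ_of_le u hk (mem_atMost.mp hq), sum_add_distrib,
    sum_const, card_atMost (by omega), nsmul_eq_mul, ← mul_sum, ← totalMovesSum]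
  push_cast [Nat.factorial_succ (k + 1)]
  ring

lemma two_sub_mul_totalMovesSum [CommRing R] (u : R) {k : ℕ} (hk : k < N) :
    (2 - u) * totalMovesSum N u k = u * ((k + 2)! - (u + k) * ∏ j ∈ range k, (u + j)) := by
  induction k with
  | zero =>
    obtain ⟨a, ha⟩ := card_eq_one.mp (card_atMost hk)
    rw [totalMovesSum, ha, sum_singleton, movesSum_zero]
    simp only [range_zero, prod_empty]
    ring
  | succ k ih =>
    have ih := ih (by omega)
    rw [totalMovesSum_succ u hk, prod_range_succ]
    push_cast [Nat.factorial_succ] at ih ⊢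
    linear_combination (u + k + 1) * ih

lemma two_sub_mul_movesSum_self [CommRing R] (u : R) {k : ℕ} (hk : k < N) :
    (2 - u) * movesSum u k (⟨k, hk⟩ : Fin N) =
      (2 - u) * k ! * u + u ^ 2 * ((k + 1)! - ∏ j ∈ range k, (u + j)) := by
  cases k with
  | zero =>
    rw [movesSum_zero]
    norm_num
  | succ k =>
    have htotal := two_sub_mul_totalMovesSum (N := N) u (k := k) (by omega)
    rw [movesSum_succ_self u hk, prod_range_succ]
    push_cast [Nat.factorial_succ] at htotal ⊢
    linear_combination u * htotal

end GeneratingFunctions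

end FisherYates

open FisherYates

/-- Explicit formula
`φ_{n,n}(u) = u/n + (u²/(2-u))·[1 - u(u+1)⋯(u+n-2)/n!]` for `n ≥ 1`
(the rising product is empty when `n = 1`), as an identity of rational
functions, i.e. for every `u ≠ 2`. -/
theorem phi_nn_explicit (n : ℕ) (hn : 1 ≤ n) (u : ℚ) (hu : u ≠ 2) :
    phi n n u = u / n +
      (u ^ 2 / (2 - u)) *
        (1 - (∏ j ∈ Finset.range (n - 1), (u + j)) / n.factorial) := by
  obtain ⟨m, rfl⟩ := Nat.exists_eq_add_of_le' hn
  have hsum : ∑ π : Perm (Fin (m + 1)), u ^ moves π ⟨m + 1 - 1, by omega⟩ =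
      movesSum u m (⟨m, lt_add_one m⟩ : Fin (m + 1)) := by
    rw [movesSum, fixingAbove_of_le le_rfl]
    rfl
  have h2u : (2 : ℚ) - u ≠ 0 := sub_ne_zero.mpr hu.symm
  have hself := two_sub_mul_movesSum_self u (lt_add_one m)
  rw [phi, dif_pos ⟨hn, le_rfl⟩, hsum, Nat.add_sub_cancel, Nat.factorial_succ]
  push_cast [Nat.factorial_succ] at hself ⊢
  field_simp
  linear_combination hself
end

section
/- For 1 ≤ p < n, φ_{n,p}(u) = ((n-p+1)/n)·u + (p/n)·(u²/(2-u))·[1 - u(u+1)⋯(u+p-2)/p!], where φ_{n,p} is the probability generating function of the number of moves of symbol p under Fisher-Yates on n symbols. -/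
/-!
Write `S_k(p)` for the sum of `u ^ moves` of the (0-based) symbol `p` over the permutations
supported on `{0, …, k}`, and `T_k = ∑_{q ≤ k} S_k(q)`. Peeling off the last transposition of
the Fisher–Yates factorisation `π = σ * swap (k + 1) q` gives
`S_{k+1}(p) = (k + 1)! u + (k + 1) S_k(p)` for `p ≤ k` and `S_{k+1}(k + 1) = (k + 1)! u + u T_k`,
hence `T_{k+1} = (k + 2)! u + (u + k + 1) T_k`. This last recursion solves to
`(2 - u) T_k = u ((k + 2)! - u (u + 1) ⋯ (u + k))`, which yields the diagonal value `S_p(p)`;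
the first one says that `S_k(p) / k!` grows by exactly `u` per stage from `k = p` to `k = n - 1`.
-/

namespace FisherYates

open Equiv Finset Nat

variable {n : ℕ}

def fixAbove (n k : ℕ) : Finset (Perm (Fin n)) :=
  univ.filter fun π => ∀ i : Fin n, k < i.val → π i = i

def initSeg (n m : ℕ) : Finset (Fin n) :=
  univ.filter fun q => q.val ≤ m

@[simp]
lemma mem_fixAbove {k : ℕ} {π : Perm (Fin n)} :
    π ∈ fixAbove n k ↔ ∀ i : Fin n, k < i.val → π i = i := by
  simp [fixAbove]

@[simp]
lemma mem_initSeg {m : ℕ} {q : Fin n} : q ∈ initSeg n m ↔ q.val ≤ m := by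
  simp [initSeg]

lemma initSeg_eq_Iic {m : ℕ} (hm : m < n) : initSeg n m = Iic ⟨m, hm⟩ := by
  ext q
  simp [Fin.le_def]

lemma card_initSeg {m : ℕ} (hm : m < n) : #(initSeg n m) = m + 1 := by
  rw [initSeg_eq_Iic hm, Fin.card_Iic]

lemma initSeg_succ_erase {k : ℕ} (hk : k + 1 < n) :
    (initSeg n (k + 1)).erase ⟨k + 1, hk⟩ = initSeg n k := by
  ext q
  simp only [mem_erase, mem_initSeg, ne_eq, Fin.ext_iff]
  omega

lemma fixAbove_zero : fixAbove n 0 = {1} := by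
  ext π
  simp only [mem_fixAbove, mem_singleton]
  refine ⟨fun h => Equiv.ext fun i => ?_, by rintro rfl i _; rfl⟩
  by_cases hi : i.val = 0
  · by_contra hne
    have hπi : (π i).val ≠ 0 := fun h0 => hne (Fin.ext (h0.trans hi.symm))
    exact hne (π.injective (h (π i) (Nat.pos_of_ne_zero hπi)))
  · exact h i (Nat.pos_of_ne_zero hi)

lemma fixAbove_pred : fixAbove n (n - 1) = univ := by
  ext π
  simp only [mem_fixAbove, mem_univ, iff_true]
  intro i hi
  omega

lemma inv_apply_of_mem_fixAbove {k : ℕ} {σ : Perm (Fin n)} (hσ : σ ∈ fixAbove n k)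
    {i : Fin n} (hi : k < i.val) : σ⁻¹ i = i := by
  rw [Perm.inv_eq_iff_eq, mem_fixAbove.mp hσ i hi]

lemma mul_swap_inv_apply {k : ℕ} (hk : k + 1 < n) {σ : Perm (Fin n)}
    (hσ : σ ∈ fixAbove n k) (q : Fin n) :
    (σ * swap ⟨k + 1, hk⟩ q)⁻¹ ⟨k + 1, hk⟩ = q := by
  rw [mul_inv_rev, Perm.mul_apply, inv_apply_of_mem_fixAbove hσ (by simp)]
  simp

lemma mul_swap_mem_fixAbove {k : ℕ} (hk : k + 1 < n) {σ : Perm (Fin n)}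
    (hσ : σ ∈ fixAbove n k) {q : Fin n} (hq : q.val ≤ k + 1) :
    σ * swap ⟨k + 1, hk⟩ q ∈ fixAbove n (k + 1) := by
  refine mem_fixAbove.mpr fun i hi => ?_
  rw [Perm.mul_apply, swap_apply_of_ne_of_ne (Fin.ne_of_val_ne (by simp; omega))
    (Fin.ne_of_val_ne (by omega))]
  exact mem_fixAbove.mp hσ i (by omega)

lemma inv_apply_le_of_mem_fixAbove {k : ℕ} (hk : k + 1 < n) {π : Perm (Fin n)}
    (hπ : π ∈ fixAbove n (k + 1)) : (π⁻¹ ⟨k + 1, hk⟩).val ≤ k + 1 := by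
  by_contra! hgt
  have h : π⁻¹ ⟨k + 1, hk⟩ = ⟨k + 1, hk⟩ := by simpa using (mem_fixAbove.mp hπ _ hgt).symm
  simp [h] at hgt

lemma mul_swap_inv_mem_fixAbove {k : ℕ} (hk : k + 1 < n) {π : Perm (Fin n)}
    (hπ : π ∈ fixAbove n (k + 1)) :
    π * swap ⟨k + 1, hk⟩ (π⁻¹ ⟨k + 1, hk⟩) ∈ fixAbove n k := by
  have hq := inv_apply_le_of_mem_fixAbove hk hπ
  refine mem_fixAbove.mpr fun i hi => ?_
  by_cases hil : i = ⟨k + 1, hk⟩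
  · simp [hil]
  · have hi' : k + 1 < i.val := by simp [Fin.ext_iff] at hil; omega
    rw [Perm.mul_apply, swap_apply_of_ne_of_ne hil (Fin.ne_of_val_ne (by omega))]
    exact mem_fixAbove.mp hπ i hi'

lemma sum_fixAbove_succ {M : Type*} [AddCommMonoid M] {k : ℕ} (hk : k + 1 < n)
    (f : Perm (Fin n) → M) :
    ∑ π ∈ fixAbove n (k + 1), f π =
      ∑ q ∈ initSeg n (k + 1), ∑ σ ∈ fixAbove n k, f (σ * swap ⟨k + 1, hk⟩ q) := by
  rw [← sum_product']
  refine sum_nbij' (fun π => (π⁻¹ ⟨k + 1, hk⟩, π * swap ⟨k + 1, hk⟩ (π⁻¹ ⟨k + 1, hk⟩)))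
    (fun x => x.2 * swap ⟨k + 1, hk⟩ x.1) (fun π hπ => ?_) (fun x hx => ?_) (fun π _ => ?_)
    (fun x hx => ?_) (fun π _ => ?_)
  · exact mem_product.mpr ⟨mem_initSeg.mpr (inv_apply_le_of_mem_fixAbove hk hπ),
      mul_swap_inv_mem_fixAbove hk hπ⟩
  · obtain ⟨hq, hσ⟩ := mem_product.mp hx
    exact mul_swap_mem_fixAbove hk hσ (mem_initSeg.mp hq)
  · simp [mul_assoc]
  · obtain ⟨-, hσ⟩ := mem_product.mp hx
    rw [mul_swap_inv_apply hk hσ, mul_swap_mul_self]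
  · simp [mul_assoc]

lemma movesAux_succ_mul_swap {k : ℕ} (hk : k + 1 < n) {σ : Perm (Fin n)}
    (hσ : σ ∈ fixAbove n k) (q p : Fin n) :
    movesAux (k + 1) (σ * swap ⟨k + 1, hk⟩ q) p =
      if p = ⟨k + 1, hk⟩ then
        (if q = ⟨k + 1, hk⟩ then 1 else 1 + movesAux k σ q)
      else if p = q then 1 else movesAux k σ p := by
  rw [movesAux, dif_pos hk]
  simp only [mul_swap_inv_apply hk hσ, mul_swap_mul_self]

lemma card_fixAbove {k : ℕ} (hk : k < n) : #(fixAbove n k) = (k + 1)! := by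
  induction k with
  | zero => simp [fixAbove_zero]
  | succ k ih =>
    have h := sum_fixAbove_succ hk fun _ => 1
    simp only [sum_const, smul_eq_mul, mul_one, card_initSeg hk, ih (by omega)] at h
    rw [h, Nat.factorial_succ (k + 1)]

section GeneratingFunctions

variable {R : Type*} [CommRing R]

def stageGF (n k : ℕ) (p : Fin n) (u : R) : R :=
  ∑ π ∈ fixAbove n k, u ^ movesAux k π p

def stageTotalGF (n k : ℕ) (u : R) : R :=
  ∑ q ∈ initSeg n k, stageGF n k q u

lemma stageGF_zero (p : Fin n) (u : R) : stageGF n 0 p u = u := by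
  simp [stageGF, fixAbove_zero, movesAux]

lemma stageTotalGF_zero (hn : 0 < n) (u : R) : stageTotalGF n 0 u = u := by
  simp [stageTotalGF, stageGF_zero, card_initSeg hn]

lemma stageGF_succ_of_le {k : ℕ} (hk : k + 1 < n) {p : Fin n} (hp : p.val ≤ k) (u : R) :
    stageGF n (k + 1) p u = (k + 1)! * u + (k + 1) * stageGF n k p u := by
  have hpmem : p ∈ initSeg n (k + 1) := mem_initSeg.mpr (by omega)
  have hp_ne : p ≠ ⟨k + 1, hk⟩ := Fin.ne_of_val_ne (by simp; omega)
  have hinner : ∀ q, ∑ σ ∈ fixAbove n k, u ^ movesAux (k + 1) (σ * swap ⟨k + 1, hk⟩ q) p =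
      if q = p then ((k + 1)! : R) * u else stageGF n k p u := by
    intro q
    by_cases hqp : q = p
    · simp_rw [if_pos hqp]
      rw [sum_congr rfl fun σ hσ => by rw [movesAux_succ_mul_swap hk hσ, if_neg hp_ne,
        if_pos hqp.symm, pow_one]]
      simp [card_fixAbove (show k < n by omega)]
    · simp_rw [if_neg hqp]
      exact sum_congr rfl fun σ hσ => by
        rw [movesAux_succ_mul_swap hk hσ, if_neg hp_ne, if_neg (Ne.symm hqp)]
  rw [stageGF, sum_fixAbove_succ hk, sum_congr rfl fun q _ => hinner q,
    ← add_sum_erase _ _ hpmem, if_pos rfl,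
    sum_congr rfl fun q hq => if_neg (ne_of_mem_erase hq), sum_const,
    card_erase_of_mem hpmem, card_initSeg hk, nsmul_eq_mul, stageGF]
  push_cast
  ring

lemma stageGF_succ_self {k : ℕ} (hk : k + 1 < n) (u : R) :
    stageGF n (k + 1) ⟨k + 1, hk⟩ u = (k + 1)! * u + u * stageTotalGF n k u := by
  have hlast : (⟨k + 1, hk⟩ : Fin n) ∈ initSeg n (k + 1) := mem_initSeg.mpr le_rfl
  rw [stageGF, sum_fixAbove_succ hk, ← add_sum_erase _ _ hlast, initSeg_succ_erase hk,
    stageTotalGF, mul_sum]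
  congr 1
  · rw [sum_congr rfl fun σ hσ => by rw [movesAux_succ_mul_swap hk hσ, if_pos rfl, if_pos rfl]]
    simp [card_fixAbove (show k < n by omega)]
  · refine sum_congr rfl fun q hq => ?_
    have hq_ne : q ≠ ⟨k + 1, hk⟩ := Fin.ne_of_val_ne (by simp at hq ⊢; omega)
    rw [stageGF, mul_sum]
    refine sum_congr rfl fun σ hσ => ?_
    rw [movesAux_succ_mul_swap hk hσ, if_pos rfl, if_neg hq_ne, pow_add, pow_one]

lemma stageTotalGF_succ {k : ℕ} (hk : k + 1 < n) (u : R) :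
    stageTotalGF n (k + 1) u = (k + 2)! * u + (u + k + 1) * stageTotalGF n k u := by
  have hlast : (⟨k + 1, hk⟩ : Fin n) ∈ initSeg n (k + 1) := mem_initSeg.mpr le_rfl
  have hrest : ∑ q ∈ initSeg n k, stageGF n (k + 1) q u =
      (k + 1) * ((k + 1)! * u) + (k + 1) * stageTotalGF n k u := by
    rw [sum_congr rfl fun q hq => stageGF_succ_of_le hk (mem_initSeg.mp hq) u, sum_add_distrib,
      sum_const, card_initSeg (show k < n by omega), ← mul_sum, stageTotalGF, nsmul_eq_mul]
    push_cast
    ring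
  rw [stageTotalGF, ← add_sum_erase _ _ hlast, initSeg_succ_erase hk, hrest,
    stageGF_succ_self hk, Nat.factorial_succ (k + 1)]
  push_cast
  ring

lemma stageTotalGF_closed {k : ℕ} (hk : k < n) (u : R) :
    (2 - u) * stageTotalGF n k u = u * ((k + 2)! - ∏ j ∈ range (k + 1), (u + j)) := by
  induction k with
  | zero =>
    rw [stageTotalGF_zero hk]
    norm_num
    ring
  | succ k ih =>
    rw [stageTotalGF_succ hk, prod_range_succ, Nat.factorial_succ (k + 2)]
    push_cast
    linear_combination (u + k + 1) * ih (by omega)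

lemma stageGF_self_closed {k : ℕ} (hk : k < n) (u : R) :
    (2 - u) * stageGF n k ⟨k, hk⟩ u =
      (2 - u) * k ! * u + u ^ 2 * ((k + 1)! - ∏ j ∈ range k, (u + j)) := by
  cases k with
  | zero =>
    rw [stageGF_zero]
    simp
  | succ k =>
    rw [stageGF_succ_self hk]
    linear_combination u * stageTotalGF_closed (show k < n by omega) u

lemma factorial_mul_stageGF_of_le {p k : ℕ} (hp : p ≤ k) (hk : k < n) (u : R) :
    p ! * stageGF n k ⟨p, by omega⟩ u =
      k ! * (stageGF n p ⟨p, by omega⟩ u + (k - p : ℕ) * p ! * u) := by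
  induction k, hp using Nat.le_induction with
  | base => simp
  | succ k hpk ih =>
    rw [stageGF_succ_of_le hk (show p ≤ k from hpk), Nat.factorial_succ,
      Nat.cast_sub (show p ≤ k + 1 by omega)]
    rw [Nat.cast_sub hpk] at ih
    push_cast
    linear_combination (k + 1 : R) * ih (by omega)

end GeneratingFunctions

lemma phi_eq_stageGF {n p : ℕ} (h1 : 1 ≤ p) (hp : p ≤ n) (u : ℚ) :
    phi n p u = stageGF n (n - 1) ⟨p - 1, by omega⟩ u / n ! := by
  rw [phi, dif_pos ⟨h1, hp⟩, stageGF, fixAbove_pred]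
  rfl

end FisherYates

/-- Explicit formula
`φ_{n,p}(u) = ((n-p+1)/n)·u + (p/n)·(u²/(2-u))·[1 - u(u+1)⋯(u+p-2)/p!]`
for `1 ≤ p < n`, as an identity of rational functions (for every `u ≠ 2`). -/
theorem phi_np_explicit (n p : ℕ) (h1 : 1 ≤ p) (h2 : p < n) (u : ℚ) (hu : u ≠ 2) :
    phi n p u = (((n : ℚ) - p + 1) / n) * u +
      ((p : ℚ) / n) * (u ^ 2 / (2 - u)) *
        (1 - (∏ j ∈ Finset.range (p - 1), (u + j)) / p.factorial) := by
  obtain ⟨m, rfl⟩ : ∃ m, p = m + 1 := ⟨p - 1, by omega⟩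
  obtain ⟨N, rfl⟩ : ∃ N, n = N + 1 := ⟨n - 1, by omega⟩
  have hmN : m ≤ N := by omega
  have h2u : (2 : ℚ) - u ≠ 0 := sub_ne_zero.mpr hu.symm
  have hunroll := FisherYates.factorial_mul_stageGF_of_le hmN (lt_add_one N) u
  have hdiag := FisherYates.stageGF_self_closed (show m < N + 1 by omega) u
  rw [mul_comm, ← eq_div_iff (by positivity)] at hunroll
  rw [mul_comm, ← eq_div_iff h2u] at hdiag
  rw [FisherYates.phi_eq_stageGF h1 h2.le]
  simp only [add_tsub_cancel_right]
  rw [hunroll, hdiag, Nat.cast_sub hmN, Nat.factorial_succ N, Nat.factorial_succ m]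
  field_simp
  push_cast
  ring
end
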